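/- arXiv:2602.23482 — 2 statements merged into one kernel-verified Lean document; each statement's English description precedes it below -/
import Mathlib

section
/- For each positive integer T, let (u_t^{(T)})_{t=1}^T be real random variables on a probability space (Ω_T, P_T) and assume that the laws of N_T = T^{-3/2} ∑_{t=1}^T (t − t̄_T) u_t^{(T)} converge weakly (as probability measures on ℝ) to some probability measure as T → ∞. Fix κ ∈ [0, 3/2), reals μ_2 and β̄_2, and define y_t^{(T)} = μ_2 + T^{-κ} β̄_2 t + u_t^{(T)}. Then T^{-3+κ} ∑_{t=1}^T (t − t̄_T)(y_t^{(T)} − ȳ^{(T)}) converges in probability to β̄_2 / 12, where ȳ^{(T)} = T^{-1} ∑_{t=1}^T y_t^{(T)}. -/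
/-!
Subtracting the mean of `y` annihilates the intercept, and `∑ (t - t̄) t = (T³ - T) / 12`, so the
statistic minus `β̄₂ / 12` equals the deterministic `-β̄₂ / (12 T²)` plus `T^(κ - 3/2) N_T`.
Weak convergence of the laws of `N_T` makes `N_T` bounded in probability (portmanteau theorem for
the closed tails `{r ≤ |x|}`, plus tightness of the limit law), and `T^(κ - 3/2) → 0` because
`κ < 3/2`.
-/

open Filter MeasureTheory Topology Finset

lemma sum_Icc_one_natCast (T : ℕ) : ∑ t ∈ Icc 1 T, (t : ℝ) = T * (T + 1) / 2 := by
  induction T with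
  | zero => simp
  | succ n ih =>
    rw [sum_Icc_succ_top (Nat.le_add_left 1 n), ih]
    push_cast; ring

lemma sum_Icc_one_natCast_sq (T : ℕ) :
    ∑ t ∈ Icc 1 T, (t : ℝ) ^ 2 = T * (T + 1) * (2 * T + 1) / 6 := by
  induction T with
  | zero => simp
  | succ n ih =>
    rw [sum_Icc_succ_top (Nat.le_add_left 1 n), ih]
    push_cast; ring

lemma sum_Icc_one_sub_mean (T : ℕ) : ∑ t ∈ Icc 1 T, ((t : ℝ) - (T + 1) / 2) = 0 := by
  rw [sum_sub_distrib, sum_Icc_one_natCast, sum_const, Nat.card_Icc, nsmul_eq_mul,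
    Nat.add_sub_cancel]
  ring

lemma sum_Icc_one_sub_mean_mul_self (T : ℕ) :
    ∑ t ∈ Icc 1 T, ((t : ℝ) - (T + 1) / 2) * t = ((T : ℝ) ^ 3 - T) / 12 := by
  simp_rw [sub_mul, sum_sub_distrib, ← mul_sum, ← pow_two, sum_Icc_one_natCast_sq,
    sum_Icc_one_natCast]
  ring

lemma sum_Icc_one_sub_mean_mul_sub_const (T : ℕ) (y : ℕ → ℝ) (c : ℝ) :
    ∑ t ∈ Icc 1 T, ((t : ℝ) - (T + 1) / 2) * (y t - c) =
      ∑ t ∈ Icc 1 T, ((t : ℝ) - (T + 1) / 2) * y t := by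
  simp_rw [mul_sub, sum_sub_distrib, ← sum_mul, sum_Icc_one_sub_mean, zero_mul, sub_zero]

lemma sum_Icc_one_sub_mean_mul_linear_trend (T : ℕ) (a b : ℝ) (v : ℕ → ℝ) :
    ∑ t ∈ Icc 1 T, ((t : ℝ) - (T + 1) / 2) * (a + b * t + v t) =
      b * (((T : ℝ) ^ 3 - T) / 12) + ∑ t ∈ Icc 1 T, ((t : ℝ) - (T + 1) / 2) * v t := by
  simp_rw [mul_add, sum_add_distrib, ← sum_mul, sum_Icc_one_sub_mean, mul_left_comm _ b,
    ← mul_sum, sum_Icc_one_sub_mean_mul_self]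
  ring

lemma scaled_trend_covariance_sub_eq {T : ℕ} (hT : T ≠ 0) (κ a b : ℝ) (v : ℕ → ℝ) :
    (T : ℝ) ^ (κ - 3) *
        ∑ t ∈ Icc 1 T, ((t : ℝ) - ((T : ℝ) + 1) / 2) *
          ((a + (T : ℝ) ^ (-κ) * b * t + v t) -
            (T : ℝ)⁻¹ * ∑ s ∈ Icc 1 T, (a + (T : ℝ) ^ (-κ) * b * s + v s))
      - b / 12
    = -b / (12 * (T : ℝ) ^ 2) + (T : ℝ) ^ (κ - 3 / 2) *
        ((T : ℝ) ^ (-(3 : ℝ) / 2) * ∑ t ∈ Icc 1 T, ((t : ℝ) - ((T : ℝ) + 1) / 2) * v t) := by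
  have hT0 : (0 : ℝ) < T := by positivity
  have hκ : (T : ℝ) ^ (κ - 3) * (T : ℝ) ^ (-κ) = ((T : ℝ) ^ 3)⁻¹ := by
    rw [← Real.rpow_add hT0, show κ - 3 + -κ = -((3 : ℕ) : ℝ) by push_cast; ring,
      Real.rpow_neg hT0.le, Real.rpow_natCast]
  have hscale : (T : ℝ) ^ (κ - 3 / 2) * (T : ℝ) ^ (-(3 : ℝ) / 2) = (T : ℝ) ^ (κ - 3) := by
    rw [← Real.rpow_add hT0]; ring_nf
  rw [sum_Icc_one_sub_mean_mul_sub_const, sum_Icc_one_sub_mean_mul_linear_trend, ← mul_assoc,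
    hscale, mul_add, ← mul_assoc, ← mul_assoc, hκ]
  generalize ∑ t ∈ Icc 1 T, ((t : ℝ) - ((T : ℝ) + 1) / 2) * v t = S
  field_simp
  ring

namespace MeasureTheory

variable {ι E : Type*} {Ω : ι → Type*} [∀ i, MeasurableSpace (Ω i)] {P : ∀ i, Measure (Ω i)}
  {l : Filter ι} [NormedAddCommGroup E]

def BoundedInProbability (P : ∀ i, Measure (Ω i)) (X : ∀ i, Ω i → E) (l : Filter ι) : Prop :=
  ∀ ε > 0, ∃ M : ℝ, ∀ᶠ i in l, P i {ω | M ≤ ‖X i ω‖} ≤ ε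

lemma TendstoInDistribution.boundedInProbability [MeasurableSpace E] [BorelSpace E]
    [CompleteSpace E] [SecondCountableTopology E] [∀ i, IsProbabilityMeasure (P i)]
    {X : ∀ i, Ω i → E} {ν : Measure E} [IsProbabilityMeasure ν]
    (h : TendstoInDistribution X l id P ν) : BoundedInProbability P X l := by
  intro ε hε
  have htail : Tendsto (fun r : ℝ ↦ ν {x | r < ‖x‖}) atTop (𝓝 0) := by
    simpa using tendsto_measure_norm_gt_of_isTightMeasureSet (isTightMeasureSet_singleton (μ := ν))
  obtain ⟨r, hr⟩ := (htail.eventually_lt_const hε).exists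
  have hclosed : IsClosed {x : E | r + 1 ≤ ‖x‖} := isClosed_le continuous_const continuous_norm
  have hlimsup := ProbabilityMeasure.limsup_measure_closed_le_of_tendsto h.tendsto hclosed
  have hlt : ν {x | r + 1 ≤ ‖x‖} < ε :=
    (measure_mono fun x (hx : r + 1 ≤ ‖x‖) ↦ show r < ‖x‖ by linarith).trans_lt hr
  refine ⟨r + 1, (eventually_lt_of_limsup_lt (hlimsup.trans_lt (by simpa using hlt))).mono
    fun i hi ↦ ?_⟩
  simp only [ProbabilityMeasure.coe_mk,
    Measure.map_apply_of_aemeasurable (h.forall_aemeasurable i) hclosed.measurableSet] at hi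
  exact hi.le

lemma tendstoInDistribution_of_forall_integral_tendsto [MeasurableSpace E] [BorelSpace E]
    [∀ i, IsProbabilityMeasure (P i)] {X : ∀ i, Ω i → E} (hX : ∀ i, AEMeasurable (X i) (P i))
    {ν : Measure E} [IsProbabilityMeasure ν]
    (h : ∀ f : BoundedContinuousFunction E ℝ,
      Tendsto (fun i ↦ ∫ ω, f (X i ω) ∂(P i)) l (𝓝 (∫ x, f x ∂ν))) :
    TendstoInDistribution X l id P ν where
  forall_aemeasurable := hX
  tendsto := by
    refine ProbabilityMeasure.tendsto_iff_forall_integral_tendsto.mpr fun f ↦ ?_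
    simp only [ProbabilityMeasure.coe_mk, Measure.map_id]
    refine (h f).congr fun i ↦ ?_
    rw [integral_map (hX i) f.continuous.aestronglyMeasurable]

lemma BoundedInProbability.tendsto_measure_lt_norm_add_smul [NormedSpace ℝ E] {X : ∀ i, Ω i → E}
    (hX : BoundedInProbability P X l) {a : ι → ℝ} {b : ι → E} (ha : Tendsto a l (𝓝 0))
    (hb : Tendsto b l (𝓝 0)) {δ : ℝ} (hδ : 0 < δ) :
    Tendsto (fun i ↦ P i {ω | δ < ‖b i + a i • X i ω‖}) l (𝓝 0) := by
  rw [ENNReal.tendsto_nhds_zero]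
  intro ε hε
  obtain ⟨M, hM⟩ := hX ε hε
  have hsmall_a : ∀ᶠ i in l, |a i| * (|M| + 1) < δ / 2 := by
    have := ha.abs.mul_const (|M| + 1)
    rw [abs_zero, zero_mul] at this
    exact this.eventually_lt_const (half_pos hδ)
  have hsmall_b : ∀ᶠ i in l, ‖b i‖ < δ / 2 := by
    have := hb.norm
    rw [norm_zero] at this
    exact this.eventually_lt_const (half_pos hδ)
  filter_upwards [hM, hsmall_a, hsmall_b] with i hi ha' hb'
  refine le_trans (measure_mono fun ω hω ↦ ?_) hi
  simp only [Set.mem_ofPred_eq] at hω ⊢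
  by_contra! hlt
  have : ‖a i • X i ω‖ ≤ |a i| * (|M| + 1) := by
    rw [norm_smul, Real.norm_eq_abs]
    exact mul_le_mul_of_nonneg_left (by linarith [le_abs_self M]) (abs_nonneg _)
  linarith [norm_add_le (b i) (a i • X i ω)]

end MeasureTheory

theorem iv_denominator_prob_limit_general
    (Ω : ℕ → Type) [∀ T, MeasurableSpace (Ω T)]
    (P : ∀ T, Measure (Ω T)) [∀ T, IsProbabilityMeasure (P T)]
    (u : ∀ T : ℕ, ℕ → Ω T → ℝ) (hmeas : ∀ T t, Measurable (u T t))
    (κ : ℝ) (hκ1 : κ < 3 / 2) (μ2 βbar2 : ℝ)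
    (ν : Measure ℝ) (hν : IsProbabilityMeasure ν)
    (hconv : ∀ f : BoundedContinuousFunction ℝ ℝ,
      Tendsto (fun T : ℕ =>
          ∫ ω, f ((T : ℝ) ^ (-(3 : ℝ) / 2) *
            ∑ t ∈ Finset.Icc 1 T, ((t : ℝ) - ((T : ℝ) + 1) / 2) * u T t ω) ∂(P T))
        atTop (nhds (∫ x, f x ∂ν))) :
    ∀ δ > 0,
      Tendsto (fun T : ℕ =>
          P T {ω | δ <
            |(T : ℝ) ^ (κ - 3) *
                ∑ t ∈ Finset.Icc 1 T, ((t : ℝ) - ((T : ℝ) + 1) / 2) *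
                  ((μ2 + (T : ℝ) ^ (-κ) * βbar2 * t + u T t ω) -
                    (T : ℝ)⁻¹ * ∑ s ∈ Finset.Icc 1 T,
                      (μ2 + (T : ℝ) ^ (-κ) * βbar2 * s + u T s ω))
              - βbar2 / 12|})
        atTop (nhds 0) := by
  intro δ hδ
  have hN := tendstoInDistribution_of_forall_integral_tendsto (fun T ↦ by fun_prop) hconv
  have hscale : Tendsto (fun T : ℕ ↦ (T : ℝ) ^ (κ - 3 / 2)) atTop (𝓝 0) := by
    have := (tendsto_rpow_neg_atTop (by linarith : 0 < 3 / 2 - κ)).comp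
      tendsto_natCast_atTop_atTop
    rwa [neg_sub] at this
  have hbias : Tendsto (fun T : ℕ ↦ -βbar2 / (12 * (T : ℝ) ^ 2)) atTop (𝓝 0) := by
    refine tendsto_const_nhds.div_atTop (Tendsto.const_mul_atTop (by norm_num) ?_)
    exact (tendsto_pow_atTop two_ne_zero).comp tendsto_natCast_atTop_atTop
  refine (hN.boundedInProbability.tendsto_measure_lt_norm_add_smul hscale hbias hδ).congr' ?_
  filter_upwards [eventually_ne_atTop 0] with T hT
  simp only [scaled_trend_covariance_sub_eq hT, Real.norm_eq_abs, smul_eq_mul]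

/-- Lemma 2, first claim (large to small trend slopes): if the laws of
`N_T = T^{−3/2} ∑_{t=1}^T (t − t̄_T) u_t^{(T)}` converge weakly to some probability
measure, then for `y_t^{(T)} = μ₂ + T^{−κ} β̄₂ t + u_t^{(T)}` with `κ ∈ [0, 3/2)`,
`T^{−3+κ} ∑_{t=1}^T (t − t̄_T)(y_t^{(T)} − ȳ^{(T)}) →ₚ β̄₂ / 12`. -/
theorem iv_denominator_prob_limit
    (Ω : ℕ → Type) [∀ T, MeasurableSpace (Ω T)]
    (P : ∀ T, Measure (Ω T)) [∀ T, IsProbabilityMeasure (P T)]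
    (u : ∀ T : ℕ, ℕ → Ω T → ℝ) (hmeas : ∀ T t, Measurable (u T t))
    (κ : ℝ) (hκ0 : 0 ≤ κ) (hκ1 : κ < 3 / 2) (μ2 βbar2 : ℝ)
    (ν : Measure ℝ) (hν : IsProbabilityMeasure ν)
    (hconv : ∀ f : BoundedContinuousFunction ℝ ℝ,
      Tendsto (fun T : ℕ =>
          ∫ ω, f ((T : ℝ) ^ (-(3 : ℝ) / 2) *
            ∑ t ∈ Finset.Icc 1 T, ((t : ℝ) - ((T : ℝ) + 1) / 2) * u T t ω) ∂(P T))
        atTop (nhds (∫ x, f x ∂ν))) :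
    ∀ δ > 0,
      Tendsto (fun T : ℕ =>
          P T {ω | δ <
            |(T : ℝ) ^ (κ - 3) *
                ∑ t ∈ Finset.Icc 1 T, ((t : ℝ) - ((T : ℝ) + 1) / 2) *
                  ((μ2 + (T : ℝ) ^ (-κ) * βbar2 * t + u T t ω) -
                    (T : ℝ)⁻¹ * ∑ s ∈ Finset.Icc 1 T,
                      (μ2 + (T : ℝ) ^ (-κ) * βbar2 * s + u T s ω))
              - βbar2 / 12|})
        atTop (nhds 0) :=
  iv_denominator_prob_limit_general Ω P u hmeas κ hκ1 μ2 βbar2 ν hν hconv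
end

section
/- Fix κ ∈ [0, 3/2) and a real vector β̄ = (β̄_1^{(1)}, β̄_1^{(2)}, β̄_2^{(1)}, β̄_2^{(2)}), and define g(a) = a_2^{(2)} a_1^{(1)} − a_2^{(1)} a_1^{(2)} and R_{β̄}(v) = β̄_2^{(2)} v_1^{(1)} − β̄_2^{(1)} v_1^{(2)} − β̄_1^{(2)} v_2^{(1)} + β̄_1^{(1)} v_2^{(2)}. For each positive integer T, let β̂_T be an ℝ^4-valued random vector on a probability space (Ω_T, P_T) and let β_T be a deterministic vector in ℝ^4. Assume: (i) the laws of T^{3/2}(β̂_T − β_T) converge weakly to the law of an ℝ^4-valued random vector Ψ; (ii) T^{κ} β_T → β̄ as T → ∞; and (iii) T^{3/2+κ} g(β_T) → c for some real c. Then the laws of T^{3/2+κ} g(β̂_T) converge weakly to the law of c + R_{β̄}(Ψ). -/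
open Filter MeasureTheory

/-- Product-difference functional `g(a) = a₂⁽²⁾ a₁⁽¹⁾ − a₂⁽¹⁾ a₁⁽²⁾`, with the
coordinate convention `a 0 = a₁⁽¹⁾`, `a 1 = a₁⁽²⁾`, `a 2 = a₂⁽¹⁾`, `a 3 = a₂⁽²⁾`. -/
def gProd (a : Fin 4 → ℝ) : ℝ := a 3 * a 0 - a 2 * a 1

/-- Linear functional `R_β̄(v) = β̄₂⁽²⁾ v₁⁽¹⁾ − β̄₂⁽¹⁾ v₁⁽²⁾ − β̄₁⁽²⁾ v₂⁽¹⁾ + β̄₁⁽¹⁾ v₂⁽²⁾`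
(the row vector `[β̄₂⁽²⁾, −β̄₂⁽¹⁾, −β̄₁⁽²⁾, β̄₁⁽¹⁾]` acting on `ℝ⁴`), with the same
coordinate convention as `gProd`. -/
def Rlin (βbar v : Fin 4 → ℝ) : ℝ :=
  βbar 3 * v 0 - βbar 2 * v 1 - βbar 1 * v 2 + βbar 0 * v 3

lemma rlin_abs_le (x v : Fin 4 → ℝ) (M : ℝ) (hv : ∀ i, |v i| ≤ M) :
    |Rlin x v| ≤ (|x 0| + |x 1| + |x 2| + |x 3|) * M := by
  have e0 : |x 3 * v 0| ≤ |x 3| * M := by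
    rw [abs_mul]; exact mul_le_mul_of_nonneg_left (hv 0) (abs_nonneg _)
  have e1 : |x 2 * v 1| ≤ |x 2| * M := by
    rw [abs_mul]; exact mul_le_mul_of_nonneg_left (hv 1) (abs_nonneg _)
  have e2 : |x 1 * v 2| ≤ |x 1| * M := by
    rw [abs_mul]; exact mul_le_mul_of_nonneg_left (hv 2) (abs_nonneg _)
  have e3 : |x 0 * v 3| ≤ |x 0| * M := by
    rw [abs_mul]; exact mul_le_mul_of_nonneg_left (hv 3) (abs_nonneg _)
  have t0 := le_abs_self (x 3 * v 0); have t0' := neg_abs_le (x 3 * v 0)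
  have t1 := le_abs_self (x 2 * v 1); have t1' := neg_abs_le (x 2 * v 1)
  have t2 := le_abs_self (x 1 * v 2); have t2' := neg_abs_le (x 1 * v 2)
  have t3 := le_abs_self (x 0 * v 3); have t3' := neg_abs_le (x 0 * v 3)
  have hexp : (|x 0| + |x 1| + |x 2| + |x 3|) * M
      = |x 0| * M + |x 1| * M + |x 2| * M + |x 3| * M := by ring
  rw [Rlin, abs_le]
  constructor <;> linarith

lemma gProd_abs_le (v : Fin 4 → ℝ) (M : ℝ) (hM : 0 ≤ M) (hv : ∀ i, |v i| ≤ M) :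
    |gProd v| ≤ 2 * M ^ 2 := by
  have e0 : |v 3 * v 0| ≤ M * M := by
    rw [abs_mul]; exact mul_le_mul (hv 3) (hv 0) (abs_nonneg _) hM
  have e1 : |v 2 * v 1| ≤ M * M := by
    rw [abs_mul]; exact mul_le_mul (hv 2) (hv 1) (abs_nonneg _) hM
  have t0 := le_abs_self (v 3 * v 0); have t0' := neg_abs_le (v 3 * v 0)
  have t1 := le_abs_self (v 2 * v 1); have t1' := neg_abs_le (v 2 * v 1)
  rw [gProd, abs_le]
  constructor <;> nlinarith

lemma rlin_sub (b b' v : Fin 4 → ℝ) :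
    Rlin b v - Rlin b' v = Rlin (fun i => b i - b' i) v := by
  simp only [Rlin]; ring

lemma stat_identity (t : ℝ) (ht : 0 < t) (κ : ℝ) (βh β : Fin 4 → ℝ) :
    t ^ ((3:ℝ)/2 + κ) * gProd βh =
      t ^ ((3:ℝ)/2 + κ) * gProd β
      + Rlin (fun i => t ^ κ * β i) (fun i => t ^ ((3:ℝ)/2) * (βh i - β i))
      + t ^ (κ - (3:ℝ)/2) * gProd (fun i => t ^ ((3:ℝ)/2) * (βh i - β i)) := by
  have hs : (0:ℝ) < t ^ ((3:ℝ)/2) := Real.rpow_pos_of_pos ht _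
  have h1 : t ^ ((3:ℝ)/2 + κ) = t ^ ((3:ℝ)/2) * t ^ κ := Real.rpow_add ht _ _
  have h2 : t ^ (κ - (3:ℝ)/2) = t ^ κ / t ^ ((3:ℝ)/2) := Real.rpow_sub ht _ _
  simp only [gProd, Rlin]
  rw [h1, h2]
  field_simp
  ring

lemma bcf_comp_integrable {Ω α : Type*} [MeasurableSpace Ω] [TopologicalSpace α]
    (P : Measure Ω) [IsProbabilityMeasure P]
    (f : BoundedContinuousFunction α ℝ) {g : Ω → α}
    (hg : AEStronglyMeasurable (fun ω => f (g ω)) P) :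
    Integrable (fun ω => f (g ω)) P :=
  (integrable_const ‖f‖).mono' hg
    (Filter.Eventually.of_forall fun ω => f.norm_coe_le_norm _)

lemma continuous_gProd : Continuous gProd := by
  unfold gProd; fun_prop

lemma continuous_Rlin (b : Fin 4 → ℝ) : Continuous (Rlin b) := by
  unfold Rlin; fun_prop

set_option maxHeartbeats 1600000 in
/-- Theorem 3, Case 1 (numerator convergence for the product approach): if the laws
of `T^{3/2}(β̂_T − β_T)` converge weakly to the law of `Ψ`, `T^κ β_T → β̄` with
`κ ∈ [0, 3/2)`, and `T^{3/2+κ} g(β_T) → c`, then the laws of `T^{3/2+κ} g(β̂_T)`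
converge weakly to the law of `c + R_β̄(Ψ)`. -/
theorem product_statistic_weak_limit
    (κ : ℝ) (hκ0 : 0 ≤ κ) (hκ1 : κ < 3 / 2) (βbar : Fin 4 → ℝ)
    (Ω : ℕ → Type) [∀ T, MeasurableSpace (Ω T)]
    (P : ∀ T, Measure (Ω T)) [∀ T, IsProbabilityMeasure (P T)]
    (βhat : ∀ T, Ω T → Fin 4 → ℝ) (hmeas : ∀ T, Measurable (βhat T))
    (βT : ℕ → Fin 4 → ℝ)
    (Ω' : Type) [MeasurableSpace Ω'] (P' : Measure Ω') [IsProbabilityMeasure P']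
    (Ψ : Ω' → Fin 4 → ℝ) (hΨ : Measurable Ψ)
    (hconv : ∀ f : BoundedContinuousFunction (Fin 4 → ℝ) ℝ,
      Tendsto (fun T : ℕ =>
          ∫ ω, f (fun i => (T : ℝ) ^ ((3 : ℝ) / 2) * (βhat T ω i - βT T i)) ∂(P T))
        atTop (nhds (∫ ω', f (Ψ ω') ∂P')))
    (hβ : Tendsto (fun T : ℕ => fun i => (T : ℝ) ^ κ * βT T i) atTop (nhds βbar))
    (c : ℝ)
    (hg : Tendsto (fun T : ℕ => (T : ℝ) ^ ((3 : ℝ) / 2 + κ) * gProd (βT T))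
      atTop (nhds c)) :
    ∀ f : BoundedContinuousFunction ℝ ℝ,
      Tendsto (fun T : ℕ =>
          ∫ ω, f ((T : ℝ) ^ ((3 : ℝ) / 2 + κ) * gProd (βhat T ω)) ∂(P T))
        atTop (nhds (∫ ω', f (c + Rlin βbar (Ψ ω')) ∂P')) := by
  intro f
  have hvmeas : ∀ T : ℕ, Measurable
      (fun ω => (fun i => (T : ℝ) ^ ((3 : ℝ) / 2) * (βhat T ω i - βT T i)) : Ω T → Fin 4 → ℝ) :=
    fun T => measurable_pi_lambda _ fun i =>
      (((measurable_pi_apply i).comp (hmeas T)).sub measurable_const).const_mul _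
  have hGc : Continuous (fun w : Fin 4 → ℝ => c + Rlin βbar w) :=
    continuous_const.add (continuous_Rlin βbar)
  have hB : Tendsto (fun T : ℕ =>
        ∫ ω, f (c + Rlin βbar (fun i => (T : ℝ) ^ ((3 : ℝ) / 2) * (βhat T ω i - βT T i))) ∂(P T))
      atTop (nhds (∫ ω', f (c + Rlin βbar (Ψ ω')) ∂P')) :=
    hconv (f.compContinuous ⟨fun w => c + Rlin βbar w, hGc⟩)
  have i1 : ∀ T : ℕ, Integrable
      (fun ω => f ((T : ℝ) ^ ((3 : ℝ) / 2 + κ) * gProd (βhat T ω))) (P T) := fun T =>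
    bcf_comp_integrable (P T) f
      ((f.continuous.measurable.comp
        ((continuous_gProd.measurable.comp (hmeas T)).const_mul _)).aestronglyMeasurable)
  have i2 : ∀ T : ℕ, Integrable
      (fun ω => f (c + Rlin βbar (fun i => (T : ℝ) ^ ((3 : ℝ) / 2) * (βhat T ω i - βT T i)))) (P T) :=
    fun T => bcf_comp_integrable (P T) f
      (((f.continuous.comp hGc).measurable.comp (hvmeas T)).aestronglyMeasurable)
  have hA : Tendsto (fun T : ℕ =>
      (∫ ω, f ((T : ℝ) ^ ((3 : ℝ) / 2 + κ) * gProd (βhat T ω)) ∂(P T))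
      - ∫ ω, f (c + Rlin βbar (fun i => (T : ℝ) ^ ((3 : ℝ) / 2) * (βhat T ω i - βT T i))) ∂(P T))
      atTop (nhds 0) := by
    rw [NormedAddCommGroup.tendsto_nhds_zero]
    intro ε hε
    obtain ⟨C, hCdef⟩ : ∃ C : ℝ, C = ‖f‖ := ⟨_, rfl⟩
    have hC0 : (0:ℝ) ≤ C := hCdef ▸ norm_nonneg f
    have hfb : ∀ x : ℝ, ‖f x‖ ≤ C := fun x => hCdef ▸ f.norm_coe_le_norm x
    have hε₂ : (0:ℝ) < ε / (8 * (C + 1)) := div_pos hε (by linarith)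
    -- choose the cutoff level
    have hΨnorm : Measurable fun ω' => ‖Ψ ω'‖ := hΨ.norm
    have hdom : Tendsto (fun n : ℕ => ∫ ω', min 1 (max 0 (‖Ψ ω'‖ - n)) ∂P')
        atTop (nhds 0) := by
      have hdom' : Tendsto (fun n : ℕ => ∫ ω', min 1 (max 0 (‖Ψ ω'‖ - n)) ∂P')
          atTop (nhds (∫ ω', (0:ℝ) ∂P')) := by
        refine tendsto_integral_of_dominated_convergence (fun _ => (1:ℝ))
          (fun n => ?_) (integrable_const 1) (fun n => ?_) ?_
        · exact (measurable_const.min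
            (measurable_const.max (hΨnorm.sub measurable_const))).aestronglyMeasurable
        · refine Filter.Eventually.of_forall fun ω' => ?_
          have h1 : min 1 (max 0 (‖Ψ ω'‖ - n)) ≤ 1 := min_le_left _ _
          have h2 : (0:ℝ) ≤ min 1 (max 0 (‖Ψ ω'‖ - n)) :=
            le_min zero_le_one (le_max_left _ _)
          show ‖min 1 (max 0 (‖Ψ ω'‖ - (n:ℝ)))‖ ≤ (1:ℝ)
          rw [Real.norm_eq_abs, abs_le]; constructor <;> linarith
        · refine Filter.Eventually.of_forall fun ω' => ?_
          have hev : ∀ᶠ n : ℕ in atTop, min 1 (max 0 (‖Ψ ω'‖ - n)) = 0 := by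
            filter_upwards [eventually_ge_atTop ⌈‖Ψ ω'‖⌉₊] with n hn
            have h1 : ‖Ψ ω'‖ - n ≤ 0 := by
              have := Nat.le_ceil ‖Ψ ω'‖
              have h2 : (⌈‖Ψ ω'‖⌉₊ : ℝ) ≤ n := Nat.cast_le.mpr hn
              linarith
            rw [max_eq_left h1, min_eq_right zero_le_one]
          exact tendsto_const_nhds.congr' (hev.mono fun n h => h.symm)
      simpa using hdom'
    obtain ⟨n, hn⟩ := (hdom.eventually_lt_const hε₂).exists
    -- the bump function
    have φcont : Continuous fun w : Fin 4 → ℝ => min 1 (max 0 (‖w‖ - (n:ℝ))) :=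
      continuous_const.min (continuous_const.max (continuous_norm.sub continuous_const))
    set φ : BoundedContinuousFunction (Fin 4 → ℝ) ℝ :=
      BoundedContinuousFunction.mkOfBound ⟨fun w => min 1 (max 0 (‖w‖ - (n:ℝ))), φcont⟩ 1
        (by
          intro x y
          simp only [ContinuousMap.coe_mk]
          have hx1 : min 1 (max 0 (‖x‖ - (n:ℝ))) ≤ 1 := min_le_left _ _
          have hx0 : (0:ℝ) ≤ min 1 (max 0 (‖x‖ - (n:ℝ))) :=
            le_min zero_le_one (le_max_left _ _)
          have hy1 : min 1 (max 0 (‖y‖ - (n:ℝ))) ≤ 1 := min_le_left _ _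
          have hy0 : (0:ℝ) ≤ min 1 (max 0 (‖y‖ - (n:ℝ))) :=
            le_min zero_le_one (le_max_left _ _)
          rw [Real.dist_eq, abs_le]; constructor <;> linarith) with hφdef
    have hφapp : ∀ v : Fin 4 → ℝ, φ v = min 1 (max 0 (‖v‖ - (n:ℝ))) := fun v => rfl
    have hφΨ : (∫ ω', φ (Ψ ω') ∂P') < ε / (8 * (C + 1)) := hn
    have hφev := (hconv φ).eventually_lt_const hφΨ
    clear_value φ
    have hφ0 : ∀ v : Fin 4 → ℝ, (0:ℝ) ≤ φ v := fun v => by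
      rw [hφapp]; exact le_min zero_le_one (le_max_left _ _)
    have hφ1 : ∀ v : Fin 4 → ℝ, (n:ℝ) + 1 < ‖v‖ → φ v = 1 := fun v hv => by
      rw [hφapp]
      exact min_eq_left (le_max_of_le_right (by linarith))
    -- cutoff radius and compact interval
    obtain ⟨M, hMdef⟩ : ∃ M : ℝ, M = (n:ℝ) + 1 := ⟨_, rfl⟩
    have hM1 : (1:ℝ) ≤ M := by rw [hMdef]; linarith [Nat.cast_nonneg (α := ℝ) n]
    have hM0 : (0:ℝ) ≤ M := by linarith
    obtain ⟨S, hSdef⟩ : ∃ S : ℝ, S = |βbar 0| + |βbar 1| + |βbar 2| + |βbar 3| := ⟨_, rfl⟩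
    have hS0 : (0:ℝ) ≤ S := by rw [hSdef]; positivity
    obtain ⟨δ, hδ0, hδ⟩ := Metric.uniformContinuousOn_iff.mp
      ((isCompact_Icc (a := c - S*M - 1) (b := c + S*M + 1)).uniformContinuousOn_of_continuous
        f.continuous.continuousOn) (ε/4) (by positivity)
    have hδ'0 : (0:ℝ) < min δ 1 := lt_min hδ0 one_pos
    -- the error terms tend to zero
    have hb : ∀ i, Tendsto (fun T : ℕ => (T:ℝ)^κ * βT T i) atTop (nhds (βbar i)) :=
      fun i => tendsto_pi_nhds.mp hβ i
    have hd : ∀ i, Tendsto (fun T : ℕ => |(T:ℝ)^κ * βT T i - βbar i|) atTop (nhds 0) := by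
      intro i
      have := ((hb i).sub_const (βbar i)).abs
      simpa using this
    have ha : Tendsto (fun T : ℕ => |(T:ℝ)^((3:ℝ)/2+κ) * gProd (βT T) - c|) atTop (nhds 0) := by
      have := (hg.sub_const c).abs
      simpa using this
    have he : Tendsto (fun T : ℕ => |(T:ℝ)^(κ - (3:ℝ)/2)|) atTop (nhds 0) := by
      have h0 : Tendsto (fun x : ℝ => x ^ (-((3:ℝ)/2 - κ))) atTop (nhds 0) :=
        tendsto_rpow_neg_atTop (by linarith)
      have := (h0.comp tendsto_natCast_atTop_atTop).abs
      simpa [Function.comp, neg_sub] using this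
    have herr : Tendsto (fun T : ℕ => |(T:ℝ)^((3:ℝ)/2+κ) * gProd (βT T) - c|
        + (|(T:ℝ)^κ * βT T 0 - βbar 0| + |(T:ℝ)^κ * βT T 1 - βbar 1|
          + |(T:ℝ)^κ * βT T 2 - βbar 2| + |(T:ℝ)^κ * βT T 3 - βbar 3|) * M
        + |(T:ℝ)^(κ - (3:ℝ)/2)| * (2*M^2)) atTop (nhds 0) := by
      have := (ha.add (((((hd 0).add (hd 1)).add (hd 2)).add (hd 3)).mul_const M)).add
        (he.mul_const (2*M^2))
      simpa using this
    have herrEv := herr.eventually_lt_const hδ'0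
    filter_upwards [hφev, herrEv, eventually_ge_atTop 1] with T hφT herrT hT1
    have htpos : (0:ℝ) < (T:ℝ) := by exact_mod_cast Nat.cast_pos.mpr hT1
    -- pointwise bound
    have key : ∀ ω, ‖f ((T:ℝ)^((3:ℝ)/2+κ) * gProd (βhat T ω))
        - f (c + Rlin βbar (fun i => (T:ℝ)^((3:ℝ)/2) * (βhat T ω i - βT T i)))‖
        ≤ ε/4 + 2*C * φ (fun i => (T:ℝ)^((3:ℝ)/2) * (βhat T ω i - βT T i)) := by
      intro ω
      set w : Fin 4 → ℝ := fun i => (T:ℝ)^((3:ℝ)/2) * (βhat T ω i - βT T i) with hwdef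
      have hid := stat_identity (T:ℝ) htpos κ (βhat T ω) (βT T)
      rw [← hwdef] at hid
      clear_value w
      have hφw0 : (0:ℝ) ≤ φ w := hφ0 w
      rw [Real.norm_eq_abs]
      by_cases hcase : ‖w‖ ≤ M
      · -- small ball
        have hvi : ∀ i, |w i| ≤ M := fun i =>
          le_trans (by simpa using norm_le_pi_norm w i) hcase
        have e1 : (T:ℝ)^((3:ℝ)/2+κ) * gProd (βhat T ω) - (c + Rlin βbar w)
            = ((T:ℝ)^((3:ℝ)/2+κ) * gProd (βT T) - c)
              + Rlin (fun i => (T:ℝ)^κ * βT T i - βbar i) w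
              + (T:ℝ)^(κ - (3:ℝ)/2) * gProd w := by
          rw [hid, ← rlin_sub]; ring
        have hb1 : |Rlin (fun i => (T:ℝ)^κ * βT T i - βbar i) w|
            ≤ (|(T:ℝ)^κ * βT T 0 - βbar 0| + |(T:ℝ)^κ * βT T 1 - βbar 1|
              + |(T:ℝ)^κ * βT T 2 - βbar 2| + |(T:ℝ)^κ * βT T 3 - βbar 3|) * M :=
          rlin_abs_le _ w M hvi
        have hb2 : |(T:ℝ)^(κ - (3:ℝ)/2) * gProd w| ≤ |(T:ℝ)^(κ - (3:ℝ)/2)| * (2*M^2) := by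
          rw [abs_mul]
          exact mul_le_mul_of_nonneg_left (gProd_abs_le w M hM0 hvi) (abs_nonneg _)
        have hGd : |(T:ℝ)^((3:ℝ)/2+κ) * gProd (βhat T ω) - (c + Rlin βbar w)| < min δ 1 := by
          rw [e1]
          have t1 := abs_add_le (((T:ℝ)^((3:ℝ)/2+κ) * gProd (βT T) - c)
            + Rlin (fun i => (T:ℝ)^κ * βT T i - βbar i) w) ((T:ℝ)^(κ - (3:ℝ)/2) * gProd w)
          have t2 := abs_add_le ((T:ℝ)^((3:ℝ)/2+κ) * gProd (βT T) - c)
            (Rlin (fun i => (T:ℝ)^κ * βT T i - βbar i) w)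
          linarith
        have hRb : |Rlin βbar w| ≤ S * M := by
          rw [hSdef]; exact rlin_abs_le βbar w M hvi
        obtain ⟨hRbl, hRbr⟩ := abs_le.mp hRb
        obtain ⟨hGdl, hGdr⟩ := abs_le.mp hGd.le
        have hδ'le1 : min δ 1 ≤ 1 := min_le_right _ _
        have hmem1 : c + Rlin βbar w ∈ Set.Icc (c - S*M - 1) (c + S*M + 1) :=
          Set.mem_Icc.mpr ⟨by linarith, by linarith⟩
        have hmem2 : (T:ℝ)^((3:ℝ)/2+κ) * gProd (βhat T ω)
            ∈ Set.Icc (c - S*M - 1) (c + S*M + 1) :=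
          Set.mem_Icc.mpr ⟨by linarith, by linarith⟩
        have hdist := hδ _ hmem2 _ hmem1
          (by rw [Real.dist_eq]; exact hGd.trans_le (min_le_left _ _))
        rw [Real.dist_eq] at hdist
        have h2Cφ : (0:ℝ) ≤ 2*C*φ w := mul_nonneg (by linarith) hφw0
        linarith
      · -- outside the ball
        push_neg at hcase
        have hφw1 : φ w = 1 := hφ1 w (by rw [hMdef] at hcase; linarith)
        have b1 := hfb ((T:ℝ)^((3:ℝ)/2+κ) * gProd (βhat T ω))
        have b2 := hfb (c + Rlin βbar w)
        rw [Real.norm_eq_abs] at b1 b2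
        have tri : |f ((T:ℝ)^((3:ℝ)/2+κ) * gProd (βhat T ω)) - f (c + Rlin βbar w)|
            ≤ |f ((T:ℝ)^((3:ℝ)/2+κ) * gProd (βhat T ω))| + |f (c + Rlin βbar w)| := by
          have := abs_add_le (f ((T:ℝ)^((3:ℝ)/2+κ) * gProd (βhat T ω))) (-(f (c + Rlin βbar w)))
          simpa [sub_eq_add_neg] using this
        rw [hφw1]
        linarith
    -- integrate the pointwise bound
    have iφ : Integrable
        (fun ω => φ (fun i => (T:ℝ)^((3:ℝ)/2) * (βhat T ω i - βT T i))) (P T) :=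
      bcf_comp_integrable (P T) φ
        ((φ.continuous.measurable.comp (hvmeas T)).aestronglyMeasurable)
    have hint : (∫ ω, f ((T:ℝ)^((3:ℝ)/2+κ) * gProd (βhat T ω)) ∂(P T))
        - (∫ ω, f (c + Rlin βbar (fun i => (T:ℝ)^((3:ℝ)/2) * (βhat T ω i - βT T i))) ∂(P T))
        = ∫ ω, (f ((T:ℝ)^((3:ℝ)/2+κ) * gProd (βhat T ω))
          - f (c + Rlin βbar (fun i => (T:ℝ)^((3:ℝ)/2) * (βhat T ω i - βT T i)))) ∂(P T) :=
      (integral_sub (i1 T) (i2 T)).symm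
    rw [hint]
    have hφint0 : (0:ℝ) ≤ ∫ ω, φ (fun i => (T:ℝ)^((3:ℝ)/2) * (βhat T ω i - βT T i)) ∂(P T) :=
      integral_nonneg fun ω => hφ0 _
    calc ‖∫ ω, (f ((T:ℝ)^((3:ℝ)/2+κ) * gProd (βhat T ω))
          - f (c + Rlin βbar (fun i => (T:ℝ)^((3:ℝ)/2) * (βhat T ω i - βT T i)))) ∂(P T)‖
        ≤ ∫ ω, ‖f ((T:ℝ)^((3:ℝ)/2+κ) * gProd (βhat T ω))
          - f (c + Rlin βbar (fun i => (T:ℝ)^((3:ℝ)/2) * (βhat T ω i - βT T i)))‖ ∂(P T) :=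
        norm_integral_le_integral_norm _
      _ ≤ ∫ ω, (ε/4 + 2*C * φ (fun i => (T:ℝ)^((3:ℝ)/2) * (βhat T ω i - βT T i))) ∂(P T) :=
        integral_mono ((i1 T).sub (i2 T)).norm
          ((integrable_const _).add (iφ.const_mul _)) key
      _ = ε/4 + 2*C * ∫ ω, φ (fun i => (T:ℝ)^((3:ℝ)/2) * (βhat T ω i - βT T i)) ∂(P T) := by
        rw [integral_add (integrable_const _) (iφ.const_mul _), integral_const,
          integral_const_mul]
        simp
      _ < ε := by
        have h2 : 2*C * (∫ ω, φ (fun i => (T:ℝ)^((3:ℝ)/2) * (βhat T ω i - βT T i)) ∂(P T))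
            ≤ 2*C * (ε / (8 * (C + 1))) :=
          mul_le_mul_of_nonneg_left hφT.le (by linarith)
        have h3 : 2*C * (ε / (8 * (C + 1))) ≤ ε/4 := by
          rw [← mul_div_assoc, div_le_div_iff₀ (by linarith) (by norm_num : (0:ℝ) < 4)]
          nlinarith [mul_nonneg hC0 hε.le]
        linarith
  -- assemble
  have hfinal : (fun T : ℕ =>
      ∫ ω, f ((T : ℝ) ^ ((3 : ℝ) / 2 + κ) * gProd (βhat T ω)) ∂(P T))
      = fun T : ℕ =>
        ((∫ ω, f ((T : ℝ) ^ ((3 : ℝ) / 2 + κ) * gProd (βhat T ω)) ∂(P T))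
          - ∫ ω, f (c + Rlin βbar (fun i => (T : ℝ) ^ ((3 : ℝ) / 2) * (βhat T ω i - βT T i))) ∂(P T))
        + ∫ ω, f (c + Rlin βbar (fun i => (T : ℝ) ^ ((3 : ℝ) / 2) * (βhat T ω i - βT T i))) ∂(P T) := by
    funext T; ring
  rw [hfinal]
  have := hA.add hB
  simpa using this
end
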